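/- arXiv:1810.01118 — 2 statements merged into one kernel-verified Lean document; each statement's English description precedes it below -/
import Mathlib

section
/- Let (X, d) be a complete separable metric space, Z a standard Borel space, let P_X be a non-atomic Borel probability measure on X, P_Z a Borel probability measure on Z, G : Z → X a Borel measurable map, and c : X × X → ℝ a continuous nonnegative cost function. Then W_c(P_X, G_#P_Z) = inf over Markov kernels κ from X to Z whose aggregated posterior ∫ κ(x, ·) dP_X(x) equals P_Z, of ∬ c(x, G(z)) dκ(x, dz) dP_X(x). -/
open MeasureTheory ENNReal NNReal ProbabilityTheory

noncomputable def Wc {S : Type*} [MeasurableSpace S] (c : S × S → ℝ)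
    (μ ν : Measure S) : ℝ≥0∞ :=
  ⨅ (Γ : Measure (S × S)) (_ : Γ.map Prod.fst = μ ∧ Γ.map Prod.snd = ν),
    ∫⁻ xy, ENNReal.ofReal (c xy) ∂Γ

/-!
By disintegration, a coupling of `P_X` and `G_#P_Z` is the same as a Markov kernel `η : X → X`
with `η ∘ₘ P_X = G_#P_Z`, and its cost is `∫ c d(P_X ⊗ η)`. Every encoder `κ` gives such an `η`,
namely `G_#κ`. Conversely, let `ρ` be the conditional law of `z` given `G z` under `P_Z`; it is
carried by the fibres of `G`, so the encoder `κ = ρ ∘ η` satisfies `G_#κ = η` almost everywhere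
and `κ ∘ₘ P_X = ρ ∘ₘ G_#P_Z = P_Z`.
-/

lemma Wc_eq_iInf_compProd {S : Type*} [MeasurableSpace S] [StandardBorelSpace S]
    (c : S × S → ℝ) (μ ν : Measure S) [IsProbabilityMeasure μ] :
    Wc c μ ν = ⨅ (η : Kernel S S) (_ : IsMarkovKernel η) (_ : η ∘ₘ μ = ν),
      ∫⁻ p, ENNReal.ofReal (c p) ∂(μ ⊗ₘ η) := by
  have := nonempty_of_isProbabilityMeasure μ
  refine le_antisymm ?_ ?_
  · refine le_iInf fun η => le_iInf fun _ => le_iInf fun hη => iInf₂_le _ ⟨?_, ?_⟩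
    · exact Measure.fst_compProd μ η
    · rw [← hη]; exact Measure.snd_compProd μ η
  · refine le_iInf fun Γ => le_iInf fun ⟨hfst, hsnd⟩ => ?_
    have hΓfst : Γ.fst = μ := hfst
    have : IsProbabilityMeasure Γ := ⟨by rw [← Measure.fst_univ, hΓfst, measure_univ]⟩
    have hdis : μ ⊗ₘ Γ.condKernel = Γ := hΓfst ▸ Γ.disintegrate Γ.condKernel
    refine iInf_le_of_le Γ.condKernel (iInf_le_of_le inferInstance (iInf_le_of_le ?_ ?_))
    · rw [← Measure.snd_compProd, hdis]
      exact hsnd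
    · rw [hdis]

lemma lintegral_compProd_map {X Y Z : Type*} [MeasurableSpace X] [MeasurableSpace Y]
    [MeasurableSpace Z] {f : X × Y → ℝ≥0∞} (hf : Measurable f) {G : Z → Y} (hG : Measurable G)
    (μ : Measure X) [SFinite μ] (κ : Kernel X Z) [IsSFiniteKernel κ] :
    ∫⁻ p, f p ∂(μ ⊗ₘ κ.map G) = ∫⁻ x, ∫⁻ z, f (x, G z) ∂κ x ∂μ := by
  rw [Measure.lintegral_compProd hf]
  simp_rw [Kernel.map_apply _ hG]
  exact lintegral_congr fun x => lintegral_map (hf.comp measurable_prodMk_left) hG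

lemma map_eq_dirac_of_ae_eq {Z X : Type*} [MeasurableSpace Z] [MeasurableSpace X]
    {m : Measure Z} [IsProbabilityMeasure m] {G : Z → X} {x : X} (h : ∀ᵐ z ∂m, G z = x) :
    m.map G = Measure.dirac x := by
  rw [Measure.map_congr h, Measure.map_const, measure_univ, one_smul]

section CondDistrib

variable {X Z : Type*} [MeasurableSpace X] [MeasurableEq X] [MeasurableSpace Z]
  [StandardBorelSpace Z] [Nonempty Z] {ν : Measure Z} [IsFiniteMeasure ν] {G : Z → X}

lemma ae_ae_condDistrib_id_eq (hG : Measurable G) :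
    ∀ᵐ x ∂ν.map G, ∀ᵐ z ∂condDistrib id G ν x, G z = x := by
  have hgraph : ∀ᵐ p ∂ν.map (fun z => (G z, id z)), G p.2 = p.1 := by
    rw [ae_map_iff (hG.prodMk measurable_id).aemeasurable
      (measurableSet_eq_fun (f := fun p : X × Z => G p.2) (hG.comp measurable_snd)
        measurable_fst)]
    exact ae_of_all _ fun _ => rfl
  rw [← compProd_map_condDistrib aemeasurable_id] at hgraph
  exact Measure.ae_ae_of_ae_compProd hgraph

lemma exists_markovKernel_comp_eq_of_comp_eq_map (hG : Measurable G) {μ : Measure X}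
    (η : Kernel X X) [IsMarkovKernel η] (hη : η ∘ₘ μ = ν.map G) :
    ∃ κ : Kernel X Z, IsMarkovKernel κ ∧ κ ∘ₘ μ = ν ∧ ⇑(κ.map G) =ᵐ[μ] ⇑η := by
  set ρ := condDistrib id G ν
  refine ⟨ρ ∘ₖ η, inferInstance, ?_, ?_⟩
  · rw [← Measure.comp_assoc, hη, condDistrib_comp_map hG.aemeasurable aemeasurable_id,
      Measure.map_id]
  · have hfib : ∀ᵐ x ∂μ, ∀ᵐ y ∂η x, ∀ᵐ z ∂ρ y, G z = y :=
      Measure.ae_ae_of_ae_comp (hη ▸ ae_ae_condDistrib_id_eq hG)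
    filter_upwards [hfib] with x hx
    rw [Kernel.map_comp, Kernel.comp_apply]
    calc (η x).bind (ρ.map G) = (η x).bind Measure.dirac := by
          refine Measure.bind_congr_right ?_
          filter_upwards [hx] with y hy
          rw [Kernel.map_apply _ hG, map_eq_dirac_of_ae_eq hy]
      _ = η x := Measure.bind_dirac

end CondDistrib

theorem wc_eq_inf_probabilistic_encoders_general
    {X Z : Type*} [MetricSpace X] [CompleteSpace X] [TopologicalSpace.SeparableSpace X]
    [MeasurableSpace X] [BorelSpace X]
    [MeasurableSpace Z] [StandardBorelSpace Z]
    (P_X : Measure X) [IsProbabilityMeasure P_X]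
    (P_Z : Measure Z) [IsProbabilityMeasure P_Z]
    (G : Z → X) (hG : Measurable G)
    (c : X × X → ℝ) (hc : Continuous c) :
    Wc c P_X (P_Z.map G) =
      ⨅ (κ : Kernel X Z) (_ : IsMarkovKernel κ) (_ : P_X.bind (fun x => κ x) = P_Z),
        ∫⁻ x, ∫⁻ z, ENNReal.ofReal (c (x, G z)) ∂(κ x) ∂P_X := by
  have := nonempty_of_isProbabilityMeasure P_Z
  have hcost : Measurable fun p => ENNReal.ofReal (c p) :=
    ENNReal.measurable_ofReal.comp hc.measurable
  rw [Wc_eq_iInf_compProd]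
  refine le_antisymm ?_ ?_
  · refine le_iInf fun κ => le_iInf fun _ => le_iInf fun hκ => ?_
    refine iInf_le_of_le (κ.map G) (iInf_le_of_le (Kernel.IsMarkovKernel.map κ hG) ?_)
    refine iInf_le_of_le ?_ (lintegral_compProd_map hcost hG P_X κ).le
    rw [← Measure.map_comp _ _ hG, ← hκ]
  · refine le_iInf fun η => le_iInf fun _ => le_iInf fun hη => ?_
    obtain ⟨κ, hκ, hcomp, hmap⟩ := exists_markovKernel_comp_eq_of_comp_eq_map hG η hη
    refine iInf_le_of_le κ (iInf_le_of_le hκ (iInf_le_of_le hcomp ?_))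
    rw [← lintegral_compProd_map hcost hG, Measure.compProd_congr hmap]

/-- For a non-atomic Borel probability measure `P_X` on a complete separable metric space
`X`, a prior `P_Z` on a standard Borel space `Z`, a measurable decoder `G : Z → X` and a
continuous nonnegative cost `c`, the OT-cost `W_c(P_X, G_#P_Z)` equals the infimum, over
all Markov kernels `κ : X → Z` (probabilistic encoders) whose aggregated posterior
`∫ κ(x, ·) dP_X` equals the prior `P_Z`, of `∬ c(x, G(z)) κ(x, dz) dP_X(x)`. -/
theorem wc_eq_inf_probabilistic_encoders
    {X Z : Type*} [MetricSpace X] [CompleteSpace X] [TopologicalSpace.SeparableSpace X]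
    [MeasurableSpace X] [BorelSpace X]
    [MeasurableSpace Z] [StandardBorelSpace Z]
    (P_X : Measure X) [IsProbabilityMeasure P_X] [NullSingletonClass P_X]
    (P_Z : Measure Z) [IsProbabilityMeasure P_Z]
    (G : Z → X) (hG : Measurable G)
    (c : X × X → ℝ) (hc : Continuous c) (hc0 : ∀ xy, 0 ≤ c xy) :
    Wc c P_X (P_Z.map G) =
      ⨅ (κ : Kernel X Z) (_ : IsMarkovKernel κ) (_ : P_X.bind (fun x => κ x) = P_Z),
        ∫⁻ x, ∫⁻ z, ENNReal.ofReal (c (x, G z)) ∂(κ x) ∂P_X :=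
  wc_eq_inf_probabilistic_encoders_general P_X P_Z G hG c hc
end

section
/- Let X and Z be measurable spaces, (X, d) a metric space, let P_X be a Borel probability measure on X, P_Z a Borel probability measure on Z, G : Z → X a Borel measurable map, and let κ be a Markov kernel from X to Z whose aggregated posterior ∫ κ(x, ·) dP_X(x) equals P_Z. Then the pushforward of the joint measure P_X ⊗ κ (the measure on X × Z with first marginal P_X and conditional κ) under the map (x, z) ↦ (x, G(z)) is a coupling of P_X and G_#P_Z; consequently, for any measurable nonnegative cost c : X × X → ℝ, W_c(P_X, G_#P_Z) ≤ ∬ c(x, G(z)) dκ(x, dz) dP_X(x). -/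
/-! The joint law `P_X ⊗ κ` has marginals `P_X` and `κ ∘ₘ P_X = P_Z`; pushing it forward by
`id × G` pushes each marginal forward separately, so it becomes a coupling of `P_X` and
`G_#P_Z`, and the transport cost of this one coupling bounds the infimum `W_c`. -/

open MeasureTheory ENNReal NNReal ProbabilityTheory

def IsCoupling {S T : Type*} [MeasurableSpace S] [MeasurableSpace T]
    (Γ : Measure (S × T)) (μ : Measure S) (ν : Measure T) : Prop :=
  Γ.map Prod.fst = μ ∧ Γ.map Prod.snd = ν

section Coupling

variable {S T S' T' : Type*} [MeasurableSpace S] [MeasurableSpace T] [MeasurableSpace S']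
  [MeasurableSpace T']

lemma IsCoupling.map_prodMap {Γ : Measure (S × T)} {μ : Measure S} {ν : Measure T}
    (h : IsCoupling Γ μ ν) {f : S → S'} {g : T → T'} (hf : Measurable f) (hg : Measurable g) :
    IsCoupling (Γ.map (Prod.map f g)) (μ.map f) (ν.map g) := by
  have hfg : Measurable (Prod.map f g) := hf.prodMap hg
  constructor
  · rw [Measure.map_map measurable_fst hfg, ← h.1, Measure.map_map hf measurable_fst]
    rfl
  · rw [Measure.map_map measurable_snd hfg, ← h.2, Measure.map_map hg measurable_snd]
    rfl

lemma isCoupling_compProd (μ : Measure S) [SFinite μ] (κ : Kernel S T) [IsMarkovKernel κ] :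
    IsCoupling (μ ⊗ₘ κ) μ (κ ∘ₘ μ) :=
  ⟨Measure.fst_compProd μ κ, Measure.snd_compProd μ κ⟩

lemma Wc_le_lintegral_of_isCoupling {c : S × S → ℝ} {μ ν : Measure S} {Γ : Measure (S × S)}
    (h : IsCoupling Γ μ ν) : Wc c μ ν ≤ ∫⁻ xy, ENNReal.ofReal (c xy) ∂Γ :=
  iInf₂_le Γ h

end Coupling

theorem coupling_from_kernel_and_wc_le_general
    {X Z : Type*} [MeasurableSpace X] [MeasurableSpace Z]
    (P_X : Measure X) [IsProbabilityMeasure P_X]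
    (P_Z : Measure Z)
    (G : Z → X) (hG : Measurable G)
    (κ : Kernel X Z) [IsMarkovKernel κ]
    (hκ : P_X.bind (fun x => κ x) = P_Z)
    (c : X × X → ℝ) (hcm : Measurable c) :
    IsCoupling ((P_X.compProd κ).map (fun xz => (xz.1, G xz.2))) P_X (P_Z.map G) ∧
      Wc c P_X (P_Z.map G) ≤ ∫⁻ x, ∫⁻ z, ENNReal.ofReal (c (x, G z)) ∂(κ x) ∂P_X := by
  have hΓ : IsCoupling ((P_X.compProd κ).map (fun xz => (xz.1, G xz.2))) P_X (P_Z.map G) := by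
    have h := (isCoupling_compProd P_X κ).map_prodMap measurable_id hG
    rwa [Measure.map_id, hκ] at h
  refine ⟨hΓ, (Wc_le_lintegral_of_isCoupling hΓ).trans_eq ?_⟩
  have hidG : Measurable (fun xz : X × Z => (xz.1, G xz.2)) := measurable_id.prodMap hG
  rw [lintegral_map hcm.ennreal_ofReal hidG, Measure.lintegral_compProd (by fun_prop)]

/-- Let `κ` be a Markov kernel (probabilistic encoder) from `X` to `Z` whose aggregated
posterior equals the prior `P_Z`, and `G : Z → X` a measurable decoder. Then the
pushforward of the joint measure `P_X ⊗ₘ κ` under `(x, z) ↦ (x, G z)` is a coupling of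
`P_X` and `G_#P_Z`; consequently, for any measurable nonnegative cost `c`,
`W_c(P_X, G_#P_Z) ≤ ∬ c(x, G(z)) κ(x, dz) dP_X(x)`. -/
theorem coupling_from_kernel_and_wc_le
    {X Z : Type*} [MetricSpace X] [MeasurableSpace X] [BorelSpace X] [MeasurableSpace Z]
    (P_X : Measure X) [IsProbabilityMeasure P_X]
    (P_Z : Measure Z) [IsProbabilityMeasure P_Z]
    (G : Z → X) (hG : Measurable G)
    (κ : Kernel X Z) [IsMarkovKernel κ]
    (hκ : P_X.bind (fun x => κ x) = P_Z)
    (c : X × X → ℝ) (hcm : Measurable c) (hc0 : ∀ xy, 0 ≤ c xy) :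
    IsCoupling ((P_X.compProd κ).map (fun xz => (xz.1, G xz.2))) P_X (P_Z.map G) ∧
      Wc c P_X (P_Z.map G) ≤ ∫⁻ x, ∫⁻ z, ENNReal.ofReal (c (x, G z)) ∂(κ x) ∂P_X :=
  coupling_from_kernel_and_wc_le_general P_X P_Z G hG κ hκ c hcm
end
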